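/- Suppose φ̄ : (Fin n → ℝ) → ℝ is continuously differentiable and satisfies the steady-state HJB equation with state cost m (continuous), i.e. for all x: ∇φ̄(x) ⬝ᵥ f(x) − (1/4)·((g x)ᵀ.mulVec (∇φ̄ x)) ⬝ᵥ (R⁻¹.mulVec ((g x)ᵀ.mulVec (∇φ̄ x))) + m(x) = 0. Let u : ℝ → (Fin p → ℝ) be continuous, let g be continuous, and let x : ℝ → (Fin n → ℝ) be continuously differentiable with x'(t) = f(x(t)) + (g (x t)).mulVec (u t) for all t. Then for every T ≥ 0, ∫₀ᵀ (‖u(t)‖²_R + m(x(t))) dt ≥ φ̄(x(0)) − φ̄(x(T)). -/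

import Mathlib

/-
Along any trajectory, the chain rule gives `d/dt φ̄(x t) = ∇φ̄ ⬝ (f + g u)`. Completing the square
in `u` with the quadratic form of `R` shows `-(∇φ̄ ⬝ (f + g u)) ≤ ‖u‖²_R + m`, the Hamiltonian being
minimised at `u = -½ R⁻¹ gᵀ ∇φ̄` with minimum value zero by the HJB equation. Integrating this
differential inequality from `0` to `T` gives the bound.
-/

open Matrix

/-- Euclidean gradient of a scalar function on `Fin n → ℝ`:
the vector of partial derivatives. -/
noncomputable def grad {n : ℕ} (φ : (Fin n → ℝ) → ℝ) (x : Fin n → ℝ) : Fin n → ℝ :=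
  fun i => fderiv ℝ φ x (Pi.single i 1)

/-- `R`-weighted squared norm `‖u‖²_R = u ⬝ᵥ R.mulVec u`. -/
def sqR {p : ℕ} (R : Matrix (Fin p) (Fin p) ℝ) (u : Fin p → ℝ) : ℝ :=
  u ⬝ᵥ R.mulVec u

theorem fderiv_apply_eq_grad_dotProduct {n : ℕ} (φ : (Fin n → ℝ) → ℝ) (y v : Fin n → ℝ) :
    fderiv ℝ φ y v = grad φ y ⬝ᵥ v := by
  conv_lhs => rw [pi_eq_sum_univ' v, map_sum]
  simp [grad, dotProduct, mul_comm]

namespace Matrix.PosDef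

variable {ι : Type*} [Fintype ι] [DecidableEq ι] {R : Matrix ι ι ℝ}

/-- Completing the square: the minimum is attained at `u = -½ R⁻¹ v`. -/
theorem neg_quarter_inv_le_quadratic_add_linear (hR : R.PosDef) (u v : ι → ℝ) :
    -(1 / 4 * (v ⬝ᵥ R⁻¹ *ᵥ v)) ≤ u ⬝ᵥ R *ᵥ u + v ⬝ᵥ u := by
  have hRinv : R *ᵥ (R⁻¹ *ᵥ v) = v := by
    rw [mulVec_mulVec, mul_nonsing_inv _ (isUnit_iff_isUnit_det _ |>.1 hR.isUnit), one_mulVec]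
  have hcross : R⁻¹ *ᵥ v ⬝ᵥ R *ᵥ u = v ⬝ᵥ u := by
    rw [dotProduct_mulVec, ← mulVec_transpose, ← conjTranspose_eq_transpose_of_trivial,
      hR.isHermitian.eq, hRinv]
  have hsq := hR.posSemidef.dotProduct_mulVec_nonneg (u + (1 / 2 : ℝ) • R⁻¹ *ᵥ v)
  rw [star_trivial, mulVec_add, mulVec_smul, hRinv] at hsq
  simp only [add_dotProduct, dotProduct_add, smul_dotProduct, dotProduct_smul, smul_eq_mul,
    hcross, dotProduct_comm (R⁻¹ *ᵥ v) v, dotProduct_comm u v] at hsq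
  linarith

end Matrix.PosDef

theorem neg_dotProduct_le_sqR_add_of_hjb {n p : ℕ} {R : Matrix (Fin p) (Fin p) ℝ}
    (hR : R.PosDef) {q a : Fin n → ℝ} {G : Matrix (Fin n) (Fin p) ℝ} {c : ℝ}
    (hHJB : q ⬝ᵥ a - 1 / 4 * (Gᵀ *ᵥ q ⬝ᵥ R⁻¹ *ᵥ (Gᵀ *ᵥ q)) + c = 0) (w : Fin p → ℝ) :
    -(q ⬝ᵥ (a + G *ᵥ w)) ≤ sqR R w + c := by
  have hmin := hR.neg_quarter_inv_le_quadratic_add_linear w (Gᵀ *ᵥ q)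
  rw [dotProduct_add, dotProduct_mulVec, ← mulVec_transpose]
  unfold sqR
  linarith

theorem stmt_5_general {n p : ℕ}
    (f : (Fin n → ℝ) → (Fin n → ℝ))
    (g : (Fin n → ℝ) → Matrix (Fin n) (Fin p) ℝ)
    (R : Matrix (Fin p) (Fin p) ℝ)
    (hRpd : R.PosDef)
    (m : (Fin n → ℝ) → ℝ) (hm : Continuous m)
    (φb : (Fin n → ℝ) → ℝ)
    (hφ : ContDiff ℝ 1 φb)
    (hHJB : ∀ x, grad φb x ⬝ᵥ f x
        - (1/4) * ((g x)ᵀ.mulVec (grad φb x) ⬝ᵥ R⁻¹.mulVec ((g x)ᵀ.mulVec (grad φb x)))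
        + m x = 0)
    (u : ℝ → (Fin p → ℝ)) (hu : Continuous u)
    (x : ℝ → (Fin n → ℝ))
    (hx : ∀ t, HasDerivAt x (f (x t) + (g (x t)).mulVec (u t)) t) :
    ∀ T : ℝ, 0 ≤ T →
      (∫ t in (0:ℝ)..T, (sqR R (u t) + m (x t))) ≥ φb (x 0) - φb (x T) := by
  intro T hT
  have hxc : Continuous x := continuous_iff_continuousAt.2 fun t => (hx t).continuousAt
  have hderiv : ∀ t, HasDerivAt (fun s => -φb (x s))
      (-(grad φb (x t) ⬝ᵥ (f (x t) + g (x t) *ᵥ u t))) t := fun t => by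
    have hchain := ((hφ.differentiable one_ne_zero (x t)).hasFDerivAt).comp_hasDerivAt t (hx t)
    rw [fderiv_apply_eq_grad_dotProduct] at hchain
    exact hchain.neg
  have hcost : Continuous fun t => sqR R (u t) + m (x t) :=
    (hu.dotProduct (continuous_const.matrix_mulVec hu)).add (hm.comp hxc)
  have hdecr := intervalIntegral.sub_le_integral_of_hasDeriv_right_of_le hT
    (continuous_iff_continuousAt.2 fun t => (hderiv t).continuousAt).continuousOn
    (fun t _ => (hderiv t).hasDerivWithinAt) (hcost.integrableOn_Icc)
    (fun t _ => neg_dotProduct_le_sqR_add_of_hjb hRpd (hHJB (x t)) (u t))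
  linarith

theorem stmt_5 {n p : ℕ}
    (f : (Fin n → ℝ) → (Fin n → ℝ))
    (g : (Fin n → ℝ) → Matrix (Fin n) (Fin p) ℝ)
    (hg : Continuous g)
    (R : Matrix (Fin p) (Fin p) ℝ)
    (hRsymm : R.IsSymm) (hRpd : R.PosDef)
    (m : (Fin n → ℝ) → ℝ) (hm : Continuous m)
    (φb : (Fin n → ℝ) → ℝ)
    (hφ : ContDiff ℝ 1 φb)
    (hHJB : ∀ x, grad φb x ⬝ᵥ f x
        - (1/4) * ((g x)ᵀ.mulVec (grad φb x) ⬝ᵥ R⁻¹.mulVec ((g x)ᵀ.mulVec (grad φb x)))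
        + m x = 0)
    (u : ℝ → (Fin p → ℝ)) (hu : Continuous u)
    (x : ℝ → (Fin n → ℝ)) (hxC1 : ContDiff ℝ 1 x)
    (hx : ∀ t, HasDerivAt x (f (x t) + (g (x t)).mulVec (u t)) t) :
    ∀ T : ℝ, 0 ≤ T →
      (∫ t in (0:ℝ)..T, (sqR R (u t) + m (x t))) ≥ φb (x 0) - φb (x T) :=
  stmt_5_general f g R hRpd m hm φb hφ hHJB u hu x hx
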